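/- arXiv:1611.02478 — 8 statements merged into one kernel-verified Lean document; each statement's English description precedes it below -/
import Mathlib

section
/- If f : X → Y is a continuous, discrete map from a connected, locally connected topological space X to a metric space Y (discrete meaning every fiber f⁻¹(y) is a discrete subset of X), then the pullback pseudometric f*d_Y(x₁,x₂) = inf { diam(f(α)) : α continuum containing x₁,x₂ } is a genuine metric, i.e. f*d_Y(x₁,x₂) = 0 implies x₁ = x₂. -/
/-!
Since `edist (f x₁) (f x₂)` is bounded by the pullback distance, `f x₁ = f x₂`, so both points lie
in one fibre. Discreteness of that fibre and local compactness give a compact neighbourhood `K` of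
`x₁` meeting the fibre only in `x₁`; then `f x₁` keeps a positive distance `ε` from the compact set
`f '' frontier K`. A continuum through `x₁` whose image has diameter `< ε` cannot cross
`frontier K`, so it stays in `K`, and hence `x₂ ∈ K` forces `x₂ = x₁`.
-/

/-- The pullback pseudometric. -/
noncomputable def pullbackPD {X Y : Type*} [TopologicalSpace X] [PseudoMetricSpace Y]
    (f : X → Y) (x₁ x₂ : X) : ENNReal :=
  ⨅ (α : Set X) (_ : IsCompact α ∧ IsConnected α ∧ x₁ ∈ α ∧ x₂ ∈ α),
    EMetric.diam (f '' α)

open Metric Set Topology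

section PullbackPD

variable {X Y : Type*} [TopologicalSpace X] [PseudoMetricSpace Y] {f : X → Y}

theorem edist_le_pullbackPD (x₁ x₂ : X) : edist (f x₁) (f x₂) ≤ pullbackPD f x₁ x₂ :=
  le_iInf₂ fun _ hα => edist_le_ediam_of_mem (mem_image_of_mem f hα.2.2.1)
    (mem_image_of_mem f hα.2.2.2)

theorem IsPreconnected.inter_frontier_nonempty {s K : Set X} (hs : IsPreconnected s)
    (hin : (s ∩ interior K).Nonempty) (hout : (s \ closure K).Nonempty) :
    (s ∩ frontier K).Nonempty := by
  by_contra hfr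
  have hcover : s ⊆ interior K ∪ (closure K)ᶜ := fun z hz =>
    (em (z ∈ interior K)).imp_right fun hzi hzc => hfr ⟨z, hz, hzc, hzi⟩
  obtain ⟨z, -, hzK, hzK'⟩ := hs _ _ isOpen_interior isClosed_closure.isOpen_compl hcover
    hin hout
  exact hzK' (interior_subset_closure hzK)

theorem mem_closure_of_pullbackPD_lt_infEDist {K : Set X} {x y : X} (hx : x ∈ interior K)
    (h : pullbackPD f x y < infEDist (f x) (f '' frontier K)) : y ∈ closure K := by
  by_contra hy
  simp only [pullbackPD, iInf_lt_iff] at h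
  obtain ⟨α, ⟨-, hα, hxα, hyα⟩, hdiam⟩ := h
  obtain ⟨z, hzα, hzK⟩ := hα.isPreconnected.inter_frontier_nonempty ⟨x, hxα, hx⟩ ⟨y, hyα, hy⟩
  have hle : infEDist (f x) (f '' frontier K) ≤ ediam (f '' α) :=
    calc infEDist (f x) (f '' frontier K) ≤ edist (f x) (f z) :=
          infEDist_le_edist_of_mem (mem_image_of_mem f hzK)
      _ ≤ ediam (f '' α) := edist_le_ediam_of_mem (mem_image_of_mem f hxα) (mem_image_of_mem f hzα)
  exact hle.not_gt hdiam

theorem mem_of_pullbackPD_eq_zero [T2Space X] [T2Space Y] (hf : Continuous f) {K : Set X}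
    (hK : IsCompact K) {x y : X} (hx : x ∈ interior K) (hfx : f x ∉ f '' frontier K)
    (hxy : pullbackPD f x y = 0) : y ∈ K := by
  have hfrK : IsCompact (f '' frontier K) :=
    (hK.of_isClosed_subset isClosed_frontier hK.isClosed.frontier_subset).image hf
  have hpos : 0 < infEDist (f x) (f '' frontier K) :=
    infEDist_pos_iff_notMem_closure.mpr (by rwa [hfrK.isClosed.closure_eq])
  exact hK.isClosed.closure_eq ▸ mem_closure_of_pullbackPD_lt_infEDist hx (hxy ▸ hpos)

end PullbackPD

theorem stmt_1_general {X Y : Type*} [TopologicalSpace X]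
    [LocallyCompactSpace X] [T2Space X]
    [MetricSpace Y] (f : X → Y) (hf : Continuous f)
    (hdisc : ∀ y : Y, DiscreteTopology (f ⁻¹' {y} : Set X)) :
    ∀ x₁ x₂ : X, pullbackPD f x₁ x₂ = 0 → x₁ = x₂ := by
  intro x₁ x₂ h0
  have hfx : f x₂ = f x₁ :=
    (edist_eq_zero.mp (nonpos_iff_eq_zero.mp (h0 ▸ edist_le_pullbackPD x₁ x₂))).symm
  obtain ⟨U, hU, hUfib⟩ := nhds_inter_eq_singleton_of_mem_discrete
    (isDiscrete_iff_discreteTopology.mpr (hdisc (f x₁))) (mem_singleton (f x₁))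
  have hfib : ∀ z ∈ U, f z = f x₁ → z = x₁ := fun z hzU hz =>
    eq_of_mem_singleton (hUfib ▸ ⟨hzU, hz⟩)
  obtain ⟨K, hK, hKU, hKc⟩ := local_compact_nhds hU
  have hxK : x₁ ∈ interior K := mem_interior_iff_mem_nhds.mpr hK
  have hfr : f x₁ ∉ f '' frontier K := by
    rintro ⟨z, hz, hzx⟩
    exact hz.2 (hfib z (hKU (hKc.isClosed.frontier_subset hz)) hzx ▸ hxK)
  exact (hfib x₂ (hKU (mem_of_pullbackPD_eq_zero hf hKc hxK hfr h0)) hfx).symm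

/-- For a continuous map with discrete fibers, the pullback pseudometric is a genuine
metric: it separates points. -/
theorem stmt_1 {X Y : Type*} [TopologicalSpace X] [ConnectedSpace X]
    [LocallyConnectedSpace X] [LocallyCompactSpace X] [T2Space X]
    [MetricSpace Y] (f : X → Y) (hf : Continuous f)
    (hdisc : ∀ y : Y, DiscreteTopology (f ⁻¹' {y} : Set X)) :
    ∀ x₁ x₂ : X, pullbackPD f x₁ x₂ = 0 → x₁ = x₂ :=
  stmt_1_general f hf hdisc
end

section
/- Every ball in the pullback metric space is squeezed between components of preimages of balls: for f : X → Y a proper surjective branched covering with Y proper, for every z ∈ X^f and r > 0, one has B(z,r) ⊆ U(z,π,r) ⊆ B(z,2r), where B(z,r) is the open ball in the pullback metric and U(z,π,r) is the z-component of π⁻¹(B(π(z),r)). -/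
/-- Discreteness of fibers. -/
def DiscreteFibers {X Y : Type*} [TopologicalSpace X] (f : X → Y) : Prop :=
  ∀ y : Y, DiscreteTopology (f ⁻¹' {y} : Set X)

/-- Locally bounded multiplicity. -/
def LocallyBoundedMultiplicity {X Y : Type*} [TopologicalSpace X] (f : X → Y) : Prop :=
  ∀ x : X, ∃ U ∈ nhds x, ∃ M : ℕ, ∀ y : Y, (f ⁻¹' {y} ∩ U).encard ≤ M

/-- A branched covering: continuous, open, discrete, of locally bounded multiplicity. -/
def IsBranchedCovering {X Y : Type*} [TopologicalSpace X] [TopologicalSpace Y]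
    (f : X → Y) : Prop :=
  Continuous f ∧ IsOpenMap f ∧ DiscreteFibers f ∧ LocallyBoundedMultiplicity f

/-- In a locally compact, locally connected space, any point of an open set has a
compact preconnected "neighborhood pair" inside the set. -/
lemma exists_compact_preconnected_nhd {X : Type*} [TopologicalSpace X]
    [LocallyCompactSpace X] [LocallyConnectedSpace X] {V : Set X} (hV : IsOpen V)
    {w : X} (hw : w ∈ V) :
    ∃ N O : Set X, IsCompact N ∧ IsPreconnected N ∧ IsOpen O ∧ w ∈ O ∧ O ⊆ N ∧ N ⊆ V := by
  obtain ⟨C, hCn, hCV, hCc⟩ := local_compact_nhds (hV.mem_nhds hw)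
  obtain ⟨O, hOC, hOopen, hwO, hOconn⟩ :=
    locallyConnectedSpace_iff_subsets_isOpen_isConnected.mp ‹_› w C hCn
  have hwC : w ∈ C := hOC hwO
  refine ⟨connectedComponentIn C w, O, ?_, isPreconnected_connectedComponentIn, hOopen, hwO,
    hOconn.isPreconnected.subset_connectedComponentIn hwO hOC,
    (connectedComponentIn_subset C w).trans hCV⟩
  rw [connectedComponentIn_eq_image hwC]
  have : CompactSpace C := isCompact_iff_compactSpace.mp hCc
  exact (isClosed_connectedComponent.isCompact).image continuous_subtype_val

/-- Points in the same connected component of an open set can be joined by a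
compact connected subset of the set. -/
lemma exists_compact_connected_of_mem_connectedComponentIn {X : Type*} [TopologicalSpace X]
    [LocallyCompactSpace X] [LocallyConnectedSpace X] {U : Set X} (hU : IsOpen U)
    {z w : X} (hw : w ∈ connectedComponentIn U z) :
    ∃ K : Set X, IsCompact K ∧ IsConnected K ∧ z ∈ K ∧ w ∈ K ∧ K ⊆ U := by
  have hzU : z ∈ U := connectedComponentIn_nonempty_iff.mp ⟨w, hw⟩
  set V := connectedComponentIn U z with hVdef
  have hVopen : IsOpen V := hU.connectedComponentIn
  have hVpre : IsPreconnected V := isPreconnected_connectedComponentIn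
  have hzV : z ∈ V := mem_connectedComponentIn hzU
  set S : Set X := {x | ∃ K : Set X, IsCompact K ∧ IsPreconnected K ∧ z ∈ K ∧ x ∈ K ∧ K ⊆ V}
    with hSdef
  have hzS : z ∈ S := ⟨{z}, isCompact_singleton, isPreconnected_singleton, rfl, rfl,
    Set.singleton_subset_iff.mpr hzV⟩
  -- every point of V is in the interior of S or of Sᶜ
  have hcover : V ⊆ interior S ∪ interior Sᶜ := by
    intro x hxV
    obtain ⟨N, O, hNc, hNp, hOo, hxO, hON, hNV⟩ := exists_compact_preconnected_nhd hVopen hxV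
    by_cases hxS : x ∈ S
    · obtain ⟨K, hKc, hKp, hzK, hxK, hKV⟩ := hxS
      left
      refine mem_interior.mpr ⟨O, fun y hy => ⟨K ∪ N, hKc.union hNc,
        hKp.union x hxK (hON hxO) hNp, Set.mem_union_left _ hzK,
        Set.mem_union_right _ (hON hy), Set.union_subset hKV hNV⟩, hOo, hxO⟩
    · right
      refine mem_interior.mpr ⟨O, fun y hy hyS => ?_, hOo, hxO⟩
      obtain ⟨K, hKc, hKp, hzK, hyK, hKV⟩ := hyS
      exact hxS ⟨K ∪ N, hKc.union hNc, hKp.union y hyK (hON hy) hNp,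
        Set.mem_union_left _ hzK, Set.mem_union_right _ (hON hxO),
        Set.union_subset hKV hNV⟩
  have hwS : w ∈ S := by
    by_contra hwS
    have hzint : z ∈ interior S :=
      (hcover hzV).resolve_right (fun h => (interior_subset h) hzS)
    have hwint : w ∈ interior Sᶜ :=
      (hcover hw).resolve_left (fun h => hwS (interior_subset h))
    obtain ⟨x, hxV, hx1, hx2⟩ := hVpre (interior S) (interior Sᶜ) isOpen_interior
      isOpen_interior hcover ⟨z, hzV, hzint⟩ ⟨w, hw, hwint⟩
    exact (interior_subset hx2) (interior_subset hx1)
  obtain ⟨K, hKc, hKp, hzK, hwK, hKV⟩ := hwS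
  exact ⟨K, hKc, ⟨⟨z, hzK⟩, hKp⟩, hzK, hwK, hKV.trans (connectedComponentIn_subset U z)⟩

/-- Balls in the pullback metric are squeezed between components of preimages of balls:
`B(z,r) ⊆ U(z,π,r) ⊆ B(z,2r)`. -/
theorem stmt_3 {X Y : Type*} [TopologicalSpace X] [ConnectedSpace X]
    [LocallyConnectedSpace X] [LocallyCompactSpace X]
    [MetricSpace Y] [ProperSpace Y]
    (f : X → Y) (hbc : IsBranchedCovering f) (hproper : IsProperMap f)
    (hsurj : Function.Surjective f) :
    ∀ (z : X) (r : ℝ), 0 < r →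
      {w : X | pullbackPD f z w < ENNReal.ofReal r}
          ⊆ connectedComponentIn (f ⁻¹' Metric.ball (f z) r) z ∧
      connectedComponentIn (f ⁻¹' Metric.ball (f z) r) z
          ⊆ {w : X | pullbackPD f z w < ENNReal.ofReal (2 * r)} := by
  intro z r hr
  have hcont : Continuous f := hbc.1
  have hUopen : IsOpen (f ⁻¹' Metric.ball (f z) r) := (Metric.isOpen_ball).preimage hcont
  constructor
  · intro w hw
    simp only [Set.mem_setOf_eq, pullbackPD] at hw
    obtain ⟨α, hα⟩ := iInf_lt_iff.mp hw
    obtain ⟨⟨hαc, hαconn, hzα, hwα⟩, hdiam⟩ := iInf_lt_iff.mp hα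
    have hsub : α ⊆ f ⁻¹' Metric.ball (f z) r := by
      intro x hx
      have h1 : edist (f x) (f z) ≤ EMetric.diam (f '' α) :=
        EMetric.edist_le_diam_of_mem ⟨x, hx, rfl⟩ ⟨z, hzα, rfl⟩
      have h2 : ENNReal.ofReal (dist (f x) (f z)) < ENNReal.ofReal r := by
        rw [← edist_dist]; exact lt_of_le_of_lt h1 hdiam
      exact Metric.mem_ball.mpr ((ENNReal.ofReal_lt_ofReal_iff hr).mp h2)
    exact hαconn.isPreconnected.subset_connectedComponentIn hzα hsub hwα
  · intro w hw
    obtain ⟨K, hKc, hKconn, hzK, hwK, hKU⟩ :=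
      exists_compact_connected_of_mem_connectedComponentIn hUopen hw
    have hfKc : IsCompact (f '' K) := hKc.image hcont
    obtain ⟨y, hy, hymax⟩ := hfKc.exists_isMaxOn ⟨f z, z, hzK, rfl⟩
      (continuous_dist.comp (continuous_id.prodMk continuous_const)).continuousOn
    set s := dist y (f z) with hs
    have hsr : s < r := by
      obtain ⟨x, hxK, rfl⟩ := hy
      exact Metric.mem_ball.mp (hKU hxK)
    have hdiam : EMetric.diam (f '' K) ≤ ENNReal.ofReal (2 * s) := by
      apply EMetric.diam_le
      intro a ha b hb
      calc edist a b ≤ edist a (f z) + edist (f z) b := edist_triangle _ _ _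
        _ = ENNReal.ofReal (dist a (f z)) + ENNReal.ofReal (dist b (f z)) := by
            rw [edist_dist, edist_dist, dist_comm (f z) b]
        _ ≤ ENNReal.ofReal s + ENNReal.ofReal s := by
            gcongr
            · exact hymax ha
            · exact hymax hb
        _ = ENNReal.ofReal (2 * s) := by
            rw [two_mul, ENNReal.ofReal_add dist_nonneg dist_nonneg]
    have hle : pullbackPD f z w ≤ EMetric.diam (f '' K) :=
      iInf₂_le K ⟨hKc, hKconn, hzK, hwK⟩
    refine lt_of_le_of_lt (hle.trans hdiam) ?_
    exact (ENNReal.ofReal_lt_ofReal_iff (by linarith)).mpr (by linarith)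
end

section
/- Every L-BDD map is L-BLD: if f : X → Y is a branched covering between metric spaces such that L⁻¹·diam(α) ≤ diam(f∘α) ≤ L·diam(α) for all non-constant curves α in X, then L⁻¹·ℓ(α) ≤ ℓ(f∘α) ≤ L·ℓ(α) for all non-constant curves α in X, where ℓ denotes curve length. -/
/-!
The length of a curve is the supremum of the sums `∑ d(α tᵢ, α tᵢ₊₁)` over partitions. Each
term is at most the diameter of the subarc on `[tᵢ, tᵢ₊₁]`, which the BDD inequality bounds by
`L` times the diameter, hence by `L` times the length, of the corresponding subarc of the
other curve; these lengths add up to at most the length of the whole curve.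
-/

open Set
open scoped ENNReal

namespace eVariationOn

variable {α E F : Type*} [LinearOrder α] [PseudoEMetricSpace E] [PseudoEMetricSpace F]

lemma ediam_image_le (g : α → E) (s : Set α) : Metric.ediam (g '' s) ≤ eVariationOn g s :=
  Metric.ediam_image_le_iff.2 fun _ hx _ hy => edist_le g hx hy

lemma le_mul_of_edist_le {g : α → E} {h : α → F} {s : Set α} {C : ℝ≥0∞}
    (H : ∀ x ∈ s, ∀ y ∈ s, x < y → g x ≠ g y →
      edist (g x) (g y) ≤ C * eVariationOn h (s ∩ Icc x y)) :
    eVariationOn g s ≤ C * eVariationOn h s := by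
  refine iSup_le fun ⟨n, u, hu, us⟩ => ?_
  have hstep : ∀ i, edist (g (u (i + 1))) (g (u i)) ≤
      C * eVariationOn h (s ∩ Icc (u i) (u (i + 1))) := by
    intro i
    rcases eq_or_ne (g (u i)) (g (u (i + 1))) with heq | hne
    · simp [heq]
    · have hlt : u i < u (i + 1) :=
        (hu i.le_succ).lt_of_ne fun h' => hne (congrArg g h')
      rw [edist_comm]
      exact H _ (us i) _ (us (i + 1)) hlt hne
  calc ∑ i ∈ Finset.range n, edist (g (u (i + 1))) (g (u i))
      ≤ ∑ i ∈ Finset.range n, C * eVariationOn h (s ∩ Icc (u i) (u (i + 1))) :=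
        Finset.sum_le_sum fun i _ => hstep i
    _ = C * eVariationOn h (s ∩ Icc (u 0) (u n)) := by
        rw [← Finset.mul_sum, eVariationOn.sum h hu fun i _ _ => us i]
    _ ≤ C * eVariationOn h s := by gcongr; exact mono h inter_subset_left

lemma Icc_le_mul_of_ediam_le {g : α → E} {h : α → F} {a b : α} {C : ℝ≥0∞}
    (H : ∀ x y, a ≤ x → x < y → y ≤ b → g x ≠ g y →
      Metric.ediam (g '' Icc x y) ≤ C * Metric.ediam (h '' Icc x y)) :
    eVariationOn g (Icc a b) ≤ C * eVariationOn h (Icc a b) := by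
  refine le_mul_of_edist_le fun x hx y hy hxy hne => ?_
  rw [inter_eq_right.2 (Icc_subset_Icc hx.1 hy.2)]
  calc edist (g x) (g y)
      ≤ Metric.ediam (g '' Icc x y) :=
        Metric.edist_le_ediam_of_mem (mem_image_of_mem g (left_mem_Icc.2 hxy.le))
          (mem_image_of_mem g (right_mem_Icc.2 hxy.le))
    _ ≤ C * Metric.ediam (h '' Icc x y) := H x y hx.1 hxy hy.2 hne
    _ ≤ C * eVariationOn h (Icc x y) := by gcongr; exact ediam_image_le h _

end eVariationOn

theorem stmt_5_general {X Y : Type*} [MetricSpace X] [MetricSpace Y] (f : X → Y)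
    (L : ℝ)
    (hBDD : ∀ a b : ℝ, a < b → ∀ α : ℝ → X, ContinuousOn α (Set.Icc a b) →
      (∃ s ∈ Set.Icc a b, ∃ t ∈ Set.Icc a b, α s ≠ α t) →
      EMetric.diam (α '' Set.Icc a b)
          ≤ ENNReal.ofReal L * EMetric.diam ((f ∘ α) '' Set.Icc a b) ∧
      EMetric.diam ((f ∘ α) '' Set.Icc a b)
          ≤ ENNReal.ofReal L * EMetric.diam (α '' Set.Icc a b)) :
    ∀ a b : ℝ, a < b → ∀ α : ℝ → X, ContinuousOn α (Set.Icc a b) →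
      (∃ s ∈ Set.Icc a b, ∃ t ∈ Set.Icc a b, α s ≠ α t) →
      eVariationOn α (Set.Icc a b)
          ≤ ENNReal.ofReal L * eVariationOn (f ∘ α) (Set.Icc a b) ∧
      eVariationOn (f ∘ α) (Set.Icc a b)
          ≤ ENNReal.ofReal L * eVariationOn α (Set.Icc a b) := by
  intro a b _ α hα _
  have hsubarc : ∀ x y, a ≤ x → x < y → y ≤ b → α x ≠ α y → _ :=
    fun x y hax hxy hyb hne => hBDD x y hxy α (hα.mono (Icc_subset_Icc hax hyb))
      ⟨x, left_mem_Icc.2 hxy.le, y, right_mem_Icc.2 hxy.le, hne⟩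
  exact ⟨eVariationOn.Icc_le_mul_of_ediam_le fun x y hax hxy hyb hne =>
      (hsubarc x y hax hxy hyb hne).1,
    eVariationOn.Icc_le_mul_of_ediam_le fun x y hax hxy hyb hne =>
      (hsubarc x y hax hxy hyb (ne_of_apply_ne f hne)).2⟩

/-- Every `L`-BDD branched covering is `L`-BLD: the two-sided diameter distortion bound
on all non-constant curves implies the two-sided length distortion bound. -/
theorem stmt_5 {X Y : Type*} [MetricSpace X] [MetricSpace Y] (f : X → Y)
    (hbc : IsBranchedCovering f) (L : ℝ) (hL : 1 ≤ L)
    (hBDD : ∀ a b : ℝ, a < b → ∀ α : ℝ → X, ContinuousOn α (Set.Icc a b) →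
      (∃ s ∈ Set.Icc a b, ∃ t ∈ Set.Icc a b, α s ≠ α t) →
      EMetric.diam (α '' Set.Icc a b)
          ≤ ENNReal.ofReal L * EMetric.diam ((f ∘ α) '' Set.Icc a b) ∧
      EMetric.diam ((f ∘ α) '' Set.Icc a b)
          ≤ ENNReal.ofReal L * EMetric.diam (α '' Set.Icc a b)) :
    ∀ a b : ℝ, a < b → ∀ α : ℝ → X, ContinuousOn α (Set.Icc a b) →
      (∃ s ∈ Set.Icc a b, ∃ t ∈ Set.Icc a b, α s ≠ α t) →
      eVariationOn α (Set.Icc a b)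
          ≤ ENNReal.ofReal L * eVariationOn (f ∘ α) (Set.Icc a b) ∧
      eVariationOn (f ∘ α) (Set.Icc a b)
          ≤ ENNReal.ofReal L * eVariationOn α (Set.Icc a b) :=
  stmt_5_general f L hBDD
end

section
/- Admissible pointed neighborhoods yield disjoint shrunken balls: let (A_i, x_i)_{i∈I} be a family of pointed sets in a metric space X such that for each k, B(x_k, r_k) ⊆ A_k ⊆ B(x_k, H·r_k) with H ≥ 1, and such that for each i ≠ j either x_i ∉ A_j or x_j ∉ A_i, and A_i ⊄ A_j and A_j ⊄ A_i. Then for all i ≠ j, B(x_i, r_i/(5H)) ∩ B(x_j, r_j/(5H)) = ∅. -/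
open Metric

section

variable {X : Type*} [MetricSpace X]

lemma le_dist_of_ball_subset_of_notMem {x y : X} {s : ℝ} {B : Set X}
    (hB : ball y s ⊆ B) (hx : x ∉ B) : s ≤ dist x y :=
  not_lt.mp fun h => hx (hB (mem_ball.mpr h))

lemma lt_dist_add_of_not_subset {x y : X} {r t : ℝ} {A B : Set X}
    (hA : ball x r ⊆ A) (hB : B ⊆ ball y t) (hBA : ¬ B ⊆ A) : r < dist x y + t := by
  obtain ⟨z, hzB, hzA⟩ := Set.not_subset.mp hBA
  calc r ≤ dist z x := le_dist_of_ball_subset_of_notMem hA hzA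
    _ ≤ dist x y + dist z y := by linarith [dist_triangle z y x, dist_comm x y]
    _ < dist x y + t := by linarith [mem_ball.mp (hB hzB)]

-- `s ≤ dist x y` and `r < dist x y + H s ≤ (1 + H) dist x y`, so `r + s ≤ (2 + H) dist x y`.
lemma div_add_div_le_dist_of_notMem_of_not_subset {x y : X} {r s H : ℝ} {A B : Set X}
    (hH : 1 ≤ H) (hA : ball x r ⊆ A) (hB_low : ball y s ⊆ B) (hB_up : B ⊆ ball y (H * s))
    (hx : x ∉ B) (hBA : ¬ B ⊆ A) :
    r / (5 * H) + s / (5 * H) ≤ dist x y := by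
  have hs : s ≤ dist x y := le_dist_of_ball_subset_of_notMem hB_low hx
  have hr : r < dist x y + H * s := lt_dist_add_of_not_subset hA hB_up hBA
  rw [← add_div, div_le_iff₀ (by linarith)]
  nlinarith [dist_nonneg (x := x) (y := y)]

end

theorem stmt_6_general {X : Type*} [MetricSpace X] {I : Type*}
    (x : I → X) (r : I → ℝ) (A : I → Set X) (H : ℝ) (hH : 1 ≤ H)
    (hlow : ∀ i, Metric.ball (x i) (r i) ⊆ A i)
    (hup : ∀ i, A i ⊆ Metric.ball (x i) (H * r i))
    (hadm1 : ∀ i j, i ≠ j → x i ∉ A j ∨ x j ∉ A i)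
    (hadm2 : ∀ i j, i ≠ j → ¬ A i ⊆ A j) :
    ∀ i j, i ≠ j →
      Disjoint (Metric.ball (x i) (r i / (5 * H))) (Metric.ball (x j) (r j / (5 * H))) := by
  intro i j hij
  rcases hadm1 i j hij with hx | hx
  · exact ball_disjoint_ball <| div_add_div_le_dist_of_notMem_of_not_subset hH
      (hlow i) (hlow j) (hup j) hx (hadm2 j i hij.symm)
  · exact (ball_disjoint_ball <| div_add_div_le_dist_of_notMem_of_not_subset hH
      (hlow j) (hlow i) (hup i) hx (hadm2 i j hij)).symm

/-- Admissible pointed neighborhoods yield disjoint shrunken balls. -/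
theorem stmt_6 {X : Type*} [MetricSpace X] {I : Type*}
    (x : I → X) (r : I → ℝ) (A : I → Set X) (H : ℝ) (hH : 1 ≤ H)
    (hr : ∀ i, 0 < r i)
    (hlow : ∀ i, Metric.ball (x i) (r i) ⊆ A i)
    (hup : ∀ i, A i ⊆ Metric.ball (x i) (H * r i))
    (hadm1 : ∀ i j, i ≠ j → x i ∉ A j ∨ x j ∉ A i)
    (hadm2 : ∀ i j, i ≠ j → ¬ A i ⊆ A j) :
    ∀ i j, i ≠ j →
      Disjoint (Metric.ball (x i) (r i / (5 * H))) (Metric.ball (x j) (r j / (5 * H))) :=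
  stmt_6_general x r A H hH hlow hup hadm1 hadm2
end

section
/- Admissible covering selection: let X be a metric space, S ⊆ X a relatively compact subset, and for each x ∈ S let A_x ⊆ X and r_x > 0 satisfy B(x,r_x) ⊆ A_x ⊆ B(x, H·r_x) for a fixed H ≥ 1. Then there exists a sequence of points x_i ∈ S such that S ⊆ ⋃_{i} A_{x_i} and the family (A_{x_i}, x_i) is admissible, i.e. for i ≠ j: either x_i ∉ A_{x_j} or x_j ∉ A_{x_i}, and neither A_{x_i} ⊆ A_{x_j} nor A_{x_j} ⊆ A_{x_i}. -/
open scoped Classical in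
/-- Greedy selection sequence: at stage `n`, among the points of `S` not covered by the
previously chosen sets, pick one whose (truncated) radius exceeds half the supremum. -/
noncomputable def gseq {X : Type*} [MetricSpace X] (S : Set X) (A : X → Set X)
    (r' : X → ℝ) (x0 : X) : ℕ → X
  | n =>
    if h : ∃ s, (s ∈ S ∧ ∀ m, m < n → s ∉ A (gseq S A r' x0 m)) ∧
        sSup (r' '' {t | t ∈ S ∧ ∀ m, m < n → t ∉ A (gseq S A r' x0 m)}) / 2 < r' s then
      h.choose
    else x0
  termination_by n => n

open scoped Classical in
lemma gseq_eq {X : Type*} [MetricSpace X] (S : Set X) (A : X → Set X)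
    (r' : X → ℝ) (x0 : X) (n : ℕ) :
    gseq S A r' x0 n =
    if h : ∃ s, (s ∈ S ∧ ∀ m, m < n → s ∉ A (gseq S A r' x0 m)) ∧
        sSup (r' '' {t | t ∈ S ∧ ∀ m, m < n → t ∉ A (gseq S A r' x0 m)}) / 2 < r' s then
      h.choose
    else x0 := by rw [gseq]

/-- A relatively compact set contains no infinite `ε`-separated sequence. -/
lemma no_inf_sep {X : Type*} [MetricSpace X] {S : Set X} (hS : IsCompact (closure S))
    {ε : ℝ} (hε : 0 < ε) (y : ℕ → X) (hy : ∀ n, y n ∈ S)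
    (hsep : ∀ m n, m ≠ n → ε ≤ dist (y m) (y n)) : False := by
  obtain ⟨a, -, φ, hφ, hconv⟩ := hS.tendsto_subseq (fun n => subset_closure (hy n))
  obtain ⟨N, hN⟩ := Metric.tendsto_atTop.1 hconv (ε / 2) (by linarith)
  have h1 := hN N le_rfl
  have h2 := hN (N + 1) (by omega)
  have h3 := hsep (φ N) (φ (N + 1)) (Nat.ne_of_lt (hφ (by omega)))
  have h4 := dist_triangle (y (φ N)) a (y (φ (N + 1)))
  have h5 : dist a (y (φ (N + 1))) = dist (y (φ (N + 1))) a := dist_comm _ _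
  simp only [Function.comp] at h1 h2
  linarith

/-- Admissible covering selection: from a relatively compact set and pointed
neighborhoods squeezed between balls, one can select a countable admissible subfamily
still covering the set. -/
theorem stmt_7 {X : Type*} [MetricSpace X] (S : Set X) (hS : IsCompact (closure S))
    (A : X → Set X) (r : X → ℝ) (H : ℝ) (hH : 1 ≤ H)
    (hr : ∀ x ∈ S, 0 < r x)
    (hlow : ∀ x ∈ S, Metric.ball x (r x) ⊆ A x)
    (hup : ∀ x ∈ S, A x ⊆ Metric.ball x (H * r x)) :
    ∃ T : Set X, T ⊆ S ∧ T.Countable ∧ S ⊆ ⋃ x ∈ T, A x ∧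
      ∀ x ∈ T, ∀ y ∈ T, x ≠ y →
        ((x ∉ A y ∨ y ∉ A x) ∧ ¬ A x ⊆ A y ∧ ¬ A y ⊆ A x) := by
  classical
  rcases S.eq_empty_or_nonempty with hSe | ⟨x0, hx0⟩
  · exact ⟨∅, by simp, by simp, by simp [hSe], by simp⟩
  have hH0 : (0:ℝ) < H := lt_of_lt_of_le one_pos hH
  set r' : X → ℝ := fun t => min (r t) 1 with hr'def
  have hr'pos : ∀ t ∈ S, 0 < r' t := fun t ht => lt_min (hr t ht) one_pos
  have hr'le : ∀ t, r' t ≤ r t := fun t => min_le_left _ _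
  set x : ℕ → X := gseq S A r' x0 with hxdef
  set U : ℕ → Set X := fun n => {t | t ∈ S ∧ ∀ m, m < n → t ∉ A (x m)} with hUdef
  have hxeq : ∀ n, x n =
      if h : ∃ s, s ∈ U n ∧ sSup (r' '' U n) / 2 < r' s then h.choose else x0 := by
    intro n
    exact gseq_eq S A r' x0 n
  -- the image of r' over any uncovered set is bounded above by 1
  have hbdd : ∀ n, BddAbove (r' '' U n) := by
    intro n
    refine ⟨1, ?_⟩
    rintro _ ⟨t, -, rfl⟩
    exact min_le_right _ _
  -- existence of a greedy point
  have hEx : ∀ n, (U n).Nonempty → ∃ s, s ∈ U n ∧ sSup (r' '' U n) / 2 < r' s := by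
    intro n hne
    obtain ⟨s0, hs0⟩ := hne
    have h1 : 0 < r' s0 := hr'pos s0 hs0.1
    have h2 : r' s0 ≤ sSup (r' '' U n) := le_csSup (hbdd n) ⟨s0, hs0, rfl⟩
    obtain ⟨_, ⟨s, hsU, rfl⟩, hlt⟩ :=
      exists_lt_of_lt_csSup (⟨r' s0, s0, hs0, rfl⟩ : (r' '' U n).Nonempty)
        (show sSup (r' '' U n) / 2 < sSup (r' '' U n) by linarith)
    exact ⟨s, hsU, hlt⟩
  have hxU : ∀ n, (U n).Nonempty → x n ∈ U n ∧ sSup (r' '' U n) / 2 < r' (x n) := by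
    intro n hne
    have h := hEx n hne
    rw [hxeq n, dif_pos h]
    exact h.choose_spec
  have hUmono : ∀ m n, m ≤ n → U n ⊆ U m := by
    intro m n hmn t ht
    exact ⟨ht.1, fun k hk => ht.2 k (lt_of_lt_of_le hk hmn)⟩
  have hxS : ∀ n, (U n).Nonempty → x n ∈ S := fun n hn => (hxU n hn).1.1
  -- greedy bound: any still-uncovered point has truncated radius at most twice the chosen one
  have hgreedy : ∀ n, (U n).Nonempty → ∀ s ∈ U n, r' s ≤ 2 * r' (x n) := by
    intro n hn s hs
    have h1 : r' s ≤ sSup (r' '' U n) := le_csSup (hbdd n) ⟨s, hs, rfl⟩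
    have h2 := (hxU n hn).2
    linarith
  -- separation
  have hsepmn : ∀ m n, m < n → (U n).Nonempty → r (x m) ≤ dist (x m) (x n) := by
    intro m n hmn hn
    have hxn := (hxU n hn).1
    have hm : (U m).Nonempty := ⟨x n, hUmono m n hmn.le hxn⟩
    have hxmS : x m ∈ S := hxS m hm
    have hnotin : x n ∉ A (x m) := hxn.2 m hmn
    have : x n ∉ Metric.ball (x m) (r (x m)) := fun h => hnotin (hlow _ hxmS h)
    rw [Metric.mem_ball, not_lt, dist_comm] at this
    exact this
  have hxA : ∀ n, (U n).Nonempty → x n ∈ A (x n) := by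
    intro n hn
    exact hlow _ (hxS n hn) (Metric.mem_ball_self (hr _ (hxS n hn)))
  -- containment direction: a chosen set is never contained in an earlier one
  have hnotsub : ∀ k n, k < n → (U n).Nonempty → ¬ A (x n) ⊆ A (x k) := by
    intro k n hkn hn hsub
    exact ((hxU n hn).1.2 k hkn) (hsub (hxA n hn))
  -- coverage by the full greedy family
  have hcov : ∀ s ∈ S, ∃ n, (U n).Nonempty ∧ s ∈ A (x n) := by
    intro s hs
    by_contra hcon
    push_neg at hcon
    have hsU : ∀ n, s ∈ U n := by
      intro n
      induction n using Nat.strong_induction_on with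
      | _ n ih =>
        exact ⟨hs, fun m hm => hcon m ⟨s, ih m hm⟩⟩
    have hε : 0 < r' s / 2 := by have := hr'pos s hs; linarith
    refine no_inf_sep hS hε x (fun n => hxS n ⟨s, hsU n⟩) ?_
    intro m n hmn
    rcases Nat.lt_or_ge m n with h | h
    · have h1 := hsepmn m n h ⟨s, hsU n⟩
      have h2 := hgreedy m ⟨s, hsU m⟩ s (hsU m)
      have h3 := hr'le (x m)
      linarith
    · have h' : n < m := lt_of_le_of_ne h (Ne.symm hmn)
      have h1 := hsepmn n m h' ⟨s, hsU m⟩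
      have h2 := hgreedy n ⟨s, hsU n⟩ s (hsU n)
      have h3 := hr'le (x n)
      rw [dist_comm] at h1
      linarith
  -- for each chosen index, the set of chosen indices whose set contains it is finite
  have hCfin : ∀ m, (U m).Nonempty →
      {n | (U n).Nonempty ∧ A (x m) ⊆ A (x n)}.Finite := by
    intro m hm
    by_contra hinf
    set Cm := {n | (U n).Nonempty ∧ A (x m) ⊆ A (x n)} with hCm
    have hinf' : Cm.Infinite := hinf
    have hε : 0 < r' (x m) / H := div_pos (hr'pos _ (hxS m hm)) hH0
    -- lower bound on radii of members of Cm
    have hrad : ∀ a ∈ Cm, r' (x m) / H ≤ r (x a) := by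
      intro a ha
      rcases eq_or_ne a m with rfl | hne
      · calc r' (x a) / H ≤ r' (x a) := div_le_self (hr'pos _ (hxS a hm)).le hH
          _ ≤ r (x a) := hr'le _
      · have ham : m < a := by
          rcases Nat.lt_or_ge m a with h | h
          · exact h
          · exfalso
            have h' : a < m := lt_of_le_of_ne h hne
            exact ((hxU m hm).1.2 a h') (ha.2 (hxA m hm))
        have h1 : r (x m) ≤ dist (x m) (x a) := hsepmn m a ham ha.1
        have h2 : dist (x m) (x a) < H * r (x a) := by
          have := Metric.mem_ball.1 (hup _ (hxS a ha.1) (ha.2 (hxA m hm)))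
          exact this
        have h3 := hr'le (x m)
        rw [div_le_iff₀ hH0]
        calc r' (x m) ≤ dist (x m) (x a) := le_trans h3 h1
          _ ≤ H * r (x a) := h2.le
          _ = r (x a) * H := mul_comm _ _
    have hsepC : ∀ a ∈ Cm, ∀ b ∈ Cm, a ≠ b → r' (x m) / H ≤ dist (x a) (x b) := by
      intro a ha b hb hab
      rcases Nat.lt_or_ge a b with h | h
      · calc r' (x m) / H ≤ r (x a) := hrad a ha
          _ ≤ dist (x a) (x b) := hsepmn a b h hb.1
      · have h' : b < a := lt_of_le_of_ne h (Ne.symm hab)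
        rw [dist_comm]
        calc r' (x m) / H ≤ r (x b) := hrad b hb
          _ ≤ dist (x b) (x a) := hsepmn b a h' ha.1
    have e := hinf'.natEmbedding
    refine no_inf_sep hS hε (fun k => x ((e k : Cm) : ℕ))
      (fun k => hxS _ (e k).2.1) ?_
    intro i j hij
    have hne : ((e i : Cm) : ℕ) ≠ ((e j : Cm) : ℕ) := by
      intro h
      exact hij (e.injective (Subtype.ext h))
    exact hsepC _ (e i).2 _ (e j).2 hne
  -- the selected subfamily: maximal chosen sets
  set T : Set X := {y | ∃ n, (U n).Nonempty ∧ y = x n ∧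
      ∀ k, (U k).Nonempty → A (x n) ⊆ A (x k) → k = n} with hTdef
  refine ⟨T, ?_, ?_, ?_, ?_⟩
  · rintro y ⟨n, hn, rfl, -⟩
    exact hxS n hn
  · have hsub : T ⊆ Set.range x := by rintro y ⟨n, -, rfl, -⟩; exact ⟨n, rfl⟩
    exact (Set.countable_range x).mono hsub
  · intro s hs
    obtain ⟨m, hm, hsA⟩ := hcov s hs
    have hfin := hCfin m hm
    have hmne : m ∈ {n | (U n).Nonempty ∧ A (x m) ⊆ A (x n)} := ⟨hm, subset_rfl⟩
    set F := hfin.toFinset with hF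
    have hFne : F.Nonempty := ⟨m, hfin.mem_toFinset.2 hmne⟩
    set n := F.max' hFne with hn
    have hnC : (U n).Nonempty ∧ A (x m) ⊆ A (x n) := hfin.mem_toFinset.1 (F.max'_mem hFne)
    have hmax : ∀ k, (U k).Nonempty → A (x m) ⊆ A (x k) → k ≤ n := by
      intro k h1 h2
      exact F.le_max' k (hfin.mem_toFinset.2 ⟨h1, h2⟩)
    have hxnT : x n ∈ T := by
      refine ⟨n, hnC.1, rfl, ?_⟩
      intro k hk hsub
      have hkn := hmax k hk (hnC.2.trans hsub)
      rcases eq_or_lt_of_le hkn with h | h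
      · exact h
      · exact absurd hsub (hnotsub k n h hnC.1)
    exact Set.mem_biUnion hxnT (hnC.2 hsA)
  · rintro a ⟨n, hn, rfl, hnmax⟩ b ⟨k, hk, rfl, hkmax⟩ hne
    rcases lt_trichotomy n k with hlt | heq | hgt
    · refine ⟨Or.inr ((hxU k hk).1.2 n hlt), ?_, hnotsub n k hlt hk⟩
      intro hsub
      have := hnmax k hk hsub
      omega
    · exact absurd (by rw [heq]) hne
    · refine ⟨Or.inl ((hxU n hn).1.2 k hgt), hnotsub k n hgt hn, ?_⟩
      intro hsub
      have := hkmax n hn hsub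
      omega
end

section
/- Decomposition of the n-to-one set into injectivity pieces: let ψ : X → Z be a continuous, discrete, open map, D ⊆ X a normal set (open, relatively compact, with ψ(∂D) = ∂ψ(D)), and D_n = { x ∈ D : card(ψ⁻¹(ψ(x)) ∩ D) = n }. Assume ψ restricted to D_n is a local homeomorphism onto its image. Then there exist pairwise disjoint Borel sets D_{n,1}, …, D_{n,n} with D_n = ⋃_{j=1}^n D_{n,j} such that for each j, ψ restricted to D_{n,j} is a bijection onto ψ(D_n). -/
/-!
Because `ψ` is open, the multiplicity `x ↦ #(ψ⁻¹(ψ x) ∩ D)` is lower semicontinuous on `D`, so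
`D_n` is locally closed. Colour each point of `D_n` by the first member of a countable open cover
on whose pieces `ψ` is injective: the `n` points of a fibre then carry `n` distinct colours, and
the `j`-th piece consists of the points whose colour is the `j`-th smallest of their fibre.
A colour class is a locally closed subset of the compact set `closure D`, hence σ-compact, so its
image under `ψ` is Borel; this is what makes the pieces Borel.
-/

open Set

open Classical in
lemma measurable_count_mem {Z : Type*} [MeasurableSpace Z] {B : ℕ → Set Z}
    (hB : ∀ k, MeasurableSet (B k)) (i : ℕ) :
    Measurable fun z => Nat.count (fun k => z ∈ B k) i := by
  induction i with
  | zero => simp only [Nat.count_zero, measurable_const]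
  | succ i ih =>
    simp_rw [Nat.count_succ]
    exact ih.add (Measurable.ite (hB i) measurable_const measurable_const)

section FiberRank

variable {X Z : Type*} (f : X → Z) (c : X → ℕ) (S : Set X)

def fiberColors (z : Z) : Set ℕ := {k | z ∈ f '' (S ∩ c ⁻¹' {k})}

open Classical in
noncomputable def fiberRank (x : X) : ℕ := Nat.count (· ∈ fiberColors f c S (f x)) (c x)

variable {f c S}

lemma fiberColors_eq_image (z : Z) : fiberColors f c S z = c '' (f ⁻¹' {z} ∩ S) := by
  ext k
  simp only [fiberColors, mem_ofPred_eq, mem_image, mem_inter_iff, mem_preimage,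
    mem_singleton_iff]
  tauto

lemma mem_fiberColors {x : X} (hx : x ∈ S) : c x ∈ fiberColors f c S (f x) :=
  ⟨x, ⟨hx, rfl⟩, rfl⟩

lemma encard_fiberColors (hinj : InjOn (fun x => (f x, c x)) S) (z : Z) :
    (fiberColors f c S z).encard = (f ⁻¹' {z} ∩ S).encard := by
  rw [fiberColors_eq_image]
  exact InjOn.encard_image fun x hx y hy hxy =>
    hinj hx.2 hy.2 (Prod.ext (hx.1.trans hy.1.symm) hxy)

lemma exists_finite_fiberColors {n : ℕ} (hinj : InjOn (fun x => (f x, c x)) S) {z : Z}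
    (hfib : (f ⁻¹' {z} ∩ S).encard = n) :
    ∃ h : (fiberColors f c S z).Finite, h.toFinset.card = n := by
  rw [← encard_fiberColors hinj] at hfib
  have hfin := finite_of_encard_eq_coe hfib
  exact ⟨hfin, by rwa [hfin.encard_eq_coe_toFinset_card, Nat.cast_inj] at hfib⟩

lemma fiberRank_lt {n : ℕ} (hinj : InjOn (fun x => (f x, c x)) S) {x : X} (hx : x ∈ S)
    (hfib : (f ⁻¹' {f x} ∩ S).encard = n) : fiberRank f c S x < n := by
  classical
  obtain ⟨hfin, hcard⟩ := exists_finite_fiberColors hinj hfib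
  rw [← hcard]
  exact Nat.count_lt_card hfin (mem_fiberColors hx)

lemma eq_of_fiberRank_eq (hinj : InjOn (fun x => (f x, c x)) S) {x y : X} (hx : x ∈ S)
    (hy : y ∈ S) (hxy : f x = f y) (hrank : fiberRank f c S x = fiberRank f c S y) : x = y := by
  classical
  unfold fiberRank at hrank
  rw [hxy] at hrank
  have : c x = c y := Nat.count_injective (hxy ▸ mem_fiberColors hx) (mem_fiberColors hy) hrank
  exact hinj hx hy (Prod.ext hxy this)

lemma exists_fiberRank_eq {n : ℕ} (hinj : InjOn (fun x => (f x, c x)) S) {x₀ : X}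
    (hfib : (f ⁻¹' {f x₀} ∩ S).encard = n) {j : ℕ} (hj : j < n) :
    ∃ x ∈ S, f x = f x₀ ∧ fiberRank f c S x = j := by
  classical
  obtain ⟨hfin, hcard⟩ := exists_finite_fiberColors hinj hfib
  set p : ℕ → Prop := (· ∈ fiberColors f c S (f x₀))
  obtain ⟨x, ⟨hxS, hxc⟩, hxf⟩ : p (Nat.nth p j) := Nat.nth_mem_of_lt_card hfin (hcard ▸ hj)
  refine ⟨x, hxS, hxf, ?_⟩
  rw [fiberRank, hxf, show c x = Nat.nth p j from hxc]
  exact Nat.count_nth_of_lt_card_finite hfin (hcard ▸ hj)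


variable [MeasurableSpace X] [MeasurableSpace Z]

lemma measurableSet_setOf_fiberRank_eq (hf : Measurable f)
    (hS : ∀ k, MeasurableSet (S ∩ c ⁻¹' {k})) (himage : ∀ k, MeasurableSet (f '' (S ∩ c ⁻¹' {k})))
    (j : ℕ) : MeasurableSet {x ∈ S | fiberRank f c S x = j} := by
  classical
  have : {x ∈ S | fiberRank f c S x = j} =
      ⋃ k, S ∩ c ⁻¹' {k} ∩ f ⁻¹' {z | Nat.count (· ∈ fiberColors f c S z) k = j} := by
    ext x
    simp only [mem_ofPred_eq, mem_iUnion, mem_inter_iff, mem_preimage, mem_singleton_iff]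
    exact ⟨fun ⟨hx, hj⟩ => ⟨c x, ⟨hx, rfl⟩, hj⟩,
      fun ⟨k, ⟨hx, hk⟩, hj⟩ => ⟨hx, by rwa [fiberRank, hk]⟩⟩
  rw [this]
  exact .iUnion fun k => (hS k).inter
    (hf (measurable_count_mem himage k (measurableSet_singleton j)))

theorem exists_measurable_partition_bijOn_of_encard_fiber_eq {n : ℕ} (hf : Measurable f)
    (hS : ∀ k, MeasurableSet (S ∩ c ⁻¹' {k})) (himage : ∀ k, MeasurableSet (f '' (S ∩ c ⁻¹' {k})))
    (hinj : InjOn (fun x => (f x, c x)) S) (hfib : ∀ x ∈ S, (f ⁻¹' {f x} ∩ S).encard = n) :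
    ∃ P : Fin n → Set X, (∀ j, MeasurableSet (P j)) ∧ Pairwise (Function.onFun Disjoint P) ∧
      (⋃ j, P j) = S ∧ ∀ j, BijOn f (P j) (f '' S) := by
  refine ⟨fun j => {x ∈ S | fiberRank f c S x = j},
    fun j => measurableSet_setOf_fiberRank_eq hf hS himage j, ?_, ?_, fun j => ⟨?_, ?_, ?_⟩⟩
  · exact fun i j hij => disjoint_left.mpr fun x hi hj => hij (Fin.ext (hi.2.symm.trans hj.2))
  · ext x
    simp only [mem_iUnion, mem_ofPred_eq]
    exact ⟨fun ⟨_, hx, _⟩ => hx, fun hx => ⟨⟨_, fiberRank_lt hinj hx (hfib x hx)⟩, hx, rfl⟩⟩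
  · exact fun x hx => mem_image_of_mem f hx.1
  · exact fun x hx y hy hxy => eq_of_fiberRank_eq hinj hx.1 hy.1 hxy (hx.2.trans hy.2.symm)
  · rintro _ ⟨x₀, hx₀, rfl⟩
    obtain ⟨x, hx, hxf, hrank⟩ := exists_fiberRank_eq hinj (hfib x₀ hx₀) j.2
    exact ⟨x, ⟨hx, hrank⟩, hxf⟩

end FiberRank

section FirstIndex

variable {X Z : Type*}

open Classical in
noncomputable def firstIndex (V : ℕ → Set X) (x : X) : ℕ :=
  if h : ∃ i, x ∈ V i then Nat.find h else 0

theorem firstIndex_eq_iff {V : ℕ → Set X} {x : X} (hx : ∃ i, x ∈ V i) {k : ℕ} :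
    firstIndex V x = k ↔ x ∈ V k ∧ ∀ i < k, x ∉ V i := by
  classical
  rw [firstIndex, dif_pos hx]
  exact Nat.find_eq_iff hx

theorem injOn_prod_firstIndex {f : X → Z} {V : ℕ → Set X} {S : Set X}
    (hinj : ∀ i, InjOn f (S ∩ V i)) (hcov : S ⊆ ⋃ i, V i) :
    InjOn (fun x => (f x, firstIndex V x)) S := by
  intro x hx y hy hxy
  simp only [Prod.mk.injEq] at hxy
  have hxV := ((firstIndex_eq_iff (mem_iUnion.mp (hcov hx))).mp rfl).1
  have hyV := ((firstIndex_eq_iff (mem_iUnion.mp (hcov hy))).mp rfl).1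
  rw [hxy.2] at hxV
  exact hinj _ ⟨hx, hxV⟩ ⟨hy, hyV⟩ hxy.1

end FirstIndex

theorem IsLocallyClosed.isSigmaCompact {X : Type*} [PseudoEMetricSpace X] {s K : Set X}
    (hs : IsLocallyClosed s) (hK : IsCompact K) (hsK : s ⊆ K) : IsSigmaCompact s := by
  obtain ⟨U, C, hU, hC, rfl⟩ := hs
  obtain ⟨F, hFc, hFU, hFunion, -⟩ := hU.exists_iUnion_isClosed
  refine ⟨fun m => F m ∩ C, fun m => hK.of_isClosed_subset ((hFc m).inter hC)
    ((inter_subset_inter_left C (hFU m)).trans hsK), ?_⟩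
  rw [← iUnion_inter, hFunion]

section Topology

variable {X Z : Type*} [TopologicalSpace X]

theorem IsLocallyClosed.measurableSet [MeasurableSpace X] [OpensMeasurableSpace X] {s : Set X}
    (hs : IsLocallyClosed s) : MeasurableSet s := by
  obtain ⟨U, C, hU, hC, rfl⟩ := hs
  exact hU.measurableSet.inter hC.measurableSet

theorem IsSigmaCompact.measurableSet [MeasurableSpace X] [OpensMeasurableSpace X] [T2Space X]
    {s : Set X} (hs : IsSigmaCompact s) : MeasurableSet s := by
  obtain ⟨K, hK, rfl⟩ := hs
  exact .iUnion fun n => (hK n).measurableSet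

theorem exists_nat_isOpen_cover_injOn [SecondCountableTopology X] {f : X → Z} {S : Set X}
    (h : ∀ x ∈ S, ∃ U, IsOpen U ∧ x ∈ U ∧ InjOn f (S ∩ U)) :
    ∃ V : ℕ → Set X, (∀ i, IsOpen (V i)) ∧ (∀ i, InjOn f (S ∩ V i)) ∧ S ⊆ ⋃ i, V i := by
  set 𝒰 := {U | IsOpen U ∧ InjOn f (S ∩ U)}
  obtain ⟨T, hTc, hT𝒰, hTU⟩ := TopologicalSpace.isOpen_sUnion_countable 𝒰 fun U hU => hU.1
  -- adding `∅ ∈ 𝒰` keeps the family nonempty when `S = ∅`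
  obtain ⟨V, hV⟩ := (hTc.insert ∅).exists_eq_range (insert_nonempty _ _)
  have hV𝒰 (i : ℕ) : V i ∈ 𝒰 := by
    rcases (hV ▸ mem_range_self i : V i ∈ insert ∅ T) with h | h
    · refine h ▸ ⟨isOpen_empty, ?_⟩
      rw [inter_empty]
      exact injOn_empty f
    · exact hT𝒰 h
  refine ⟨V, fun i => (hV𝒰 i).1, fun i => (hV𝒰 i).2, fun x hx => ?_⟩
  obtain ⟨U, hU, hxU, hinj⟩ := h x hx
  obtain ⟨W, hWT, hxW⟩ : x ∈ ⋃₀ T := hTU ▸ ⟨U, ⟨hU, hinj⟩, hxU⟩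
  obtain ⟨i, rfl⟩ : W ∈ range V := hV ▸ mem_insert_of_mem _ hWT
  exact mem_iUnion.mpr ⟨i, hxW⟩

theorem isLocallyClosed_inter_preimage_firstIndex {V : ℕ → Set X} {S : Set X}
    (hS : IsLocallyClosed S) (hV : ∀ i, IsOpen (V i)) (hcov : S ⊆ ⋃ i, V i) (k : ℕ) :
    IsLocallyClosed (S ∩ firstIndex V ⁻¹' {k}) := by
  have : S ∩ firstIndex V ⁻¹' {k} = S ∩ V k ∩ (⋃ i < k, V i)ᶜ := by
    ext x
    simp only [mem_inter_iff, mem_preimage, mem_singleton_iff, mem_compl_iff, mem_iUnion,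
      not_exists]
    constructor
    · rintro ⟨hx, hk⟩
      exact ⟨⟨hx, ((firstIndex_eq_iff (mem_iUnion.mp (hcov hx))).mp hk).1⟩,
        ((firstIndex_eq_iff (mem_iUnion.mp (hcov hx))).mp hk).2⟩
    · rintro ⟨⟨hx, hxk⟩, hlt⟩
      exact ⟨hx, (firstIndex_eq_iff (mem_iUnion.mp (hcov hx))).mpr ⟨hxk, hlt⟩⟩
  rw [this]
  exact (hS.inter (hV k).isLocallyClosed).inter
    (isOpen_biUnion fun i _ => hV i).isClosed_compl.isLocallyClosed

variable [T2Space X] [TopologicalSpace Z] {ψ : X → Z} {D : Set X}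

theorem isOpen_setOf_le_encard_fiber (hcont : Continuous ψ) (hopen : IsOpenMap ψ) (hD : IsOpen D)
    (k : ℕ) : IsOpen {x ∈ D | (k : ℕ∞) ≤ (ψ ⁻¹' {ψ x} ∩ D).encard} := by
  rw [isOpen_iff_forall_mem_open]
  rintro x ⟨hxD, hxk⟩
  obtain ⟨t, hts, htk⟩ := exists_subset_encard_eq hxk
  have htfin : t.Finite := finite_of_encard_eq_coe htk
  obtain ⟨U, hU, hdisj⟩ := htfin.t2_separation
  -- a point of `D` over `W` has a fibre-mate in each of the pairwise disjoint sets `U y ∩ D`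
  set W := ⋂ y ∈ t, ψ '' (U y ∩ D)
  have hW : IsOpen W := htfin.isOpen_biInter fun y _ => hopen _ ((hU y).2.inter hD)
  have hxW : ψ x ∈ W := mem_iInter₂.mpr fun y hy => ⟨y, ⟨(hU y).1, (hts hy).2⟩, (hts hy).1⟩
  refine ⟨D ∩ ψ ⁻¹' W, ?_, hD.inter (hW.preimage hcont), hxD, hxW⟩
  rintro x' ⟨hx'D, hx'W⟩
  refine ⟨hx'D, htk ▸ ?_⟩
  choose! g hgU hg using fun y hy => mem_iInter₂.mp hx'W y hy
  refine encard_le_encard_of_injOn (f := g) (fun y hy => ⟨hg y hy, (hgU y hy).2⟩)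
    fun y hy y' hy' hyy' => ?_
  by_contra hne
  exact disjoint_left.mp (hdisj hy hy' hne) (hgU y hy).1 (hyy' ▸ (hgU y' hy').1)

theorem isLocallyClosed_setOf_encard_fiber_eq (hcont : Continuous ψ) (hopen : IsOpenMap ψ)
    (hD : IsOpen D) (n : ℕ) : IsLocallyClosed {x ∈ D | (ψ ⁻¹' {ψ x} ∩ D).encard = n} := by
  have : {x ∈ D | (ψ ⁻¹' {ψ x} ∩ D).encard = n} =
      {x ∈ D | (n : ℕ∞) ≤ (ψ ⁻¹' {ψ x} ∩ D).encard} ∩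
        {x ∈ D | ((n + 1 : ℕ) : ℕ∞) ≤ (ψ ⁻¹' {ψ x} ∩ D).encard}ᶜ := by
    ext x
    simp only [mem_inter_iff, mem_compl_iff, mem_ofPred_eq, not_and, Nat.cast_add, Nat.cast_one,
      ENat.add_one_le_iff (ENat.natCast_ne_top n), not_lt]
    exact ⟨fun ⟨hx, h⟩ => ⟨⟨hx, h.ge⟩, fun _ => h.le⟩,
      fun ⟨⟨hx, h₁⟩, h₂⟩ => ⟨hx, le_antisymm (h₂ hx) h₁⟩⟩
  rw [this]
  exact (isOpen_setOf_le_encard_fiber hcont hopen hD n).isLocallyClosed.inter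
    (isOpen_setOf_le_encard_fiber hcont hopen hD (n + 1)).isClosed_compl.isLocallyClosed

end Topology

theorem stmt_8_general {X Z : Type*} [MetricSpace X] [MeasurableSpace X] [BorelSpace X]
    [TopologicalSpace.SeparableSpace X]
    [MetricSpace Z]
    (ψ : X → Z) (hcont : Continuous ψ) (hopen : IsOpenMap ψ)
    (D : Set X) (hD : IsOpen D) (hDc : IsCompact (closure D))
    (n : ℕ)
    (Dn : Set X) (hDn : Dn = {x ∈ D | (ψ ⁻¹' {ψ x} ∩ D).encard = n})
    (hloc : ∀ x ∈ Dn, ∃ U : Set X, IsOpen U ∧ x ∈ U ∧ Set.InjOn ψ (Dn ∩ U)) :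
    ∃ P : Fin n → Set X,
      (∀ j, MeasurableSet (P j)) ∧
      Pairwise (Function.onFun Disjoint P) ∧
      (⋃ j, P j) = Dn ∧
      ∀ j, Set.BijOn ψ (P j) (ψ '' Dn) := by
  borelize Z
  obtain ⟨V, hVo, hVinj, hcov⟩ := exists_nat_isOpen_cover_injOn hloc
  have hDnD : Dn ⊆ D := hDn ▸ fun x hx => hx.1
  have hfib : ∀ x ∈ Dn, (ψ ⁻¹' {ψ x} ∩ Dn).encard = n := by
    subst hDn
    rintro x ⟨-, hx⟩
    refine (congrArg encard ?_).trans hx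
    ext y
    exact ⟨fun ⟨hy, hyD, _⟩ => ⟨hy, hyD⟩,
      fun ⟨hy, hyD⟩ => ⟨hy, hyD, by rwa [show ψ y = ψ x from hy]⟩⟩
  have hpiece (k : ℕ) : IsLocallyClosed (Dn ∩ firstIndex V ⁻¹' {k}) :=
    isLocallyClosed_inter_preimage_firstIndex
      (hDn ▸ isLocallyClosed_setOf_encard_fiber_eq hcont hopen hD n) hVo hcov k
  refine exists_measurable_partition_bijOn_of_encard_fiber_eq hcont.measurable
    (fun k => (hpiece k).measurableSet) (fun k => ?_) (injOn_prod_firstIndex hVinj hcov) hfib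
  have hσ := (hpiece k).isSigmaCompact hDc (inter_subset_left.trans (hDnD.trans subset_closure))
  exact (hσ.image hcont).measurableSet

/-- Decomposition of the `n`-to-one set of a discrete open map on a normal set into
Borel pieces on each of which the map is a bijection onto the image of the whole set. -/
theorem stmt_8 {X Z : Type*} [MetricSpace X] [MeasurableSpace X] [BorelSpace X]
    [TopologicalSpace.SeparableSpace X] [LocallyCompactSpace X]
    [MetricSpace Z] [TopologicalSpace.SeparableSpace Z] [LocallyCompactSpace Z]
    (ψ : X → Z) (hcont : Continuous ψ) (hopen : IsOpenMap ψ)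
    (hdisc : ∀ z : Z, DiscreteTopology (ψ ⁻¹' {z} : Set X))
    (D : Set X) (hD : IsOpen D) (hDc : IsCompact (closure D))
    (hnormal : ψ '' frontier D = frontier (ψ '' D))
    (n : ℕ) (hn : 1 ≤ n)
    (Dn : Set X) (hDn : Dn = {x ∈ D | (ψ ⁻¹' {ψ x} ∩ D).encard = n})
    (hloc : ∀ x ∈ Dn, ∃ U : Set X, IsOpen U ∧ x ∈ U ∧ Set.InjOn ψ (Dn ∩ U)) :
    ∃ P : Fin n → Set X,
      (∀ j, MeasurableSet (P j)) ∧
      Pairwise (Function.onFun Disjoint P) ∧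
      (⋃ j, P j) = Dn ∧
      ∀ j, Set.BijOn ψ (P j) (ψ '' Dn) :=
  stmt_8_general ψ hcont hopen D hD hDc n Dn hDn hloc
end

section
/- A generalized quasisymmetric homeomorphism between bounded-turning spaces is quasisymmetric, quantitatively: let X have c₀-bounded turning, Y have c-bounded turning, and let f : X → Y be a homeomorphism such that diam f(E)/diam f(F) ≤ η(diam E/diam F) for all intersecting continua E, F ⊆ X, where η : [0,∞) → [0,∞) is a homeomorphism. Then f is ψ-quasisymmetric with ψ(t) = c·η(c₀·t), i.e. d(f(x),f(y))/d(f(x),f(z)) ≤ ψ(d(x,y)/d(x,z)) for all distinct triples x, y, z ∈ X. -/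
/-- A generalized quasisymmetric homeomorphism between bounded-turning spaces is
quasisymmetric, quantitatively, with `ψ(t) = c·η(c₀·t)`. -/
theorem stmt_12 {X Y : Type*} [MetricSpace X] [MetricSpace Y]
    (c₀ c : ℝ) (hc₀ : 1 ≤ c₀) (hc : 1 ≤ c)
    (hX : ∀ a b : X, ∃ E : Set X, IsCompact E ∧ IsConnected E ∧ a ∈ E ∧ b ∈ E ∧
        Metric.diam E ≤ c₀ * dist a b)
    (hY : ∀ a b : Y, ∃ E : Set Y, IsCompact E ∧ IsConnected E ∧ a ∈ E ∧ b ∈ E ∧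
        Metric.diam E ≤ c * dist a b)
    (f : X ≃ₜ Y)
    (η : ℝ → ℝ) (hη0 : η 0 = 0) (hηnonneg : ∀ t, 0 ≤ t → 0 ≤ η t)
    (hηmono : StrictMonoOn η (Set.Ici 0))
    (hηcont : ContinuousOn η (Set.Ici 0))
    (hηsurj : Set.SurjOn η (Set.Ici 0) (Set.Ici 0))
    (hGQS : ∀ E F : Set X, IsCompact E → IsConnected E → IsCompact F → IsConnected F →
      (E ∩ F).Nonempty →
      Metric.diam (f '' E) / Metric.diam (f '' F) ≤ η (Metric.diam E / Metric.diam F)) :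
    ∀ x y z : X, x ≠ y → x ≠ z → y ≠ z →
      dist (f x) (f y) / dist (f x) (f z) ≤ c * η (c₀ * (dist x y / dist x z)) := by
  intro x y z hxy hxz hyz
  obtain ⟨E, hEc, hEconn, hxE, hyE, hEd⟩ := hX x y
  obtain ⟨F', hF'c, hF'conn, hfxF, hfzF, hF'd⟩ := hY (f x) (f z)
  set F : Set X := f.symm '' F' with hFdef
  have hFc : IsCompact F := hF'c.image f.symm.continuous
  have hFconn : IsConnected F := hF'conn.image _ f.symm.continuous.continuousOn
  have hxF : x ∈ F := ⟨f x, hfxF, f.symm_apply_apply x⟩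
  have hzF : z ∈ F := ⟨f z, hfzF, f.symm_apply_apply z⟩
  have hfF : f '' F = F' := by
    rw [hFdef, Set.image_image]
    simp
  have hc0 : (0:ℝ) < c := lt_of_lt_of_le one_pos hc
  have hdxz : 0 < dist x z := dist_pos.mpr hxz
  have hdfxz : 0 < dist (f x) (f z) := dist_pos.mpr (f.injective.ne hxz)
  have hF'diam : dist (f x) (f z) ≤ Metric.diam F' :=
    Metric.dist_le_diam_of_mem hF'c.isBounded hfxF hfzF
  have hF'pos : 0 < Metric.diam F' := lt_of_lt_of_le hdfxz hF'diam
  have hFdiam : dist x z ≤ Metric.diam F :=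
    Metric.dist_le_diam_of_mem hFc.isBounded hxF hzF
  have key := hGQS E F hEc hEconn hFc hFconn ⟨x, hxE, hxF⟩
  rw [hfF] at key
  have hfEd : dist (f x) (f y) ≤ Metric.diam (f '' E) :=
    Metric.dist_le_diam_of_mem (hEc.image f.continuous).isBounded
      ⟨x, hxE, rfl⟩ ⟨y, hyE, rfl⟩
  -- step 1 : dist (f x)(f y) / dist (f x)(f z) ≤ c * (diam (f '' E) / diam F')
  have step1 : dist (f x) (f y) / dist (f x) (f z)
      ≤ c * (Metric.diam (f '' E) / Metric.diam F') := by
    have h1 : dist (f x) (f y) / dist (f x) (f z)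
        ≤ Metric.diam (f '' E) / dist (f x) (f z) :=
      div_le_div_of_nonneg_right hfEd hdfxz.le |>.trans_eq rfl
    have h2 : Metric.diam F' / c ≤ dist (f x) (f z) := by
      rw [div_le_iff₀ hc0]
      linarith [hF'd]
    have h3 : Metric.diam (f '' E) / dist (f x) (f z)
        ≤ Metric.diam (f '' E) / (Metric.diam F' / c) :=
      div_le_div_of_nonneg_left Metric.diam_nonneg (div_pos hF'pos hc0) h2
    have h4 : Metric.diam (f '' E) / (Metric.diam F' / c)
        = c * (Metric.diam (f '' E) / Metric.diam F') := by
      field_simp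
    linarith
  -- step 2 : monotonicity of η
  have harg : Metric.diam E / Metric.diam F ≤ c₀ * (dist x y / dist x z) := by
    have hFpos : 0 < Metric.diam F := lt_of_lt_of_le hdxz hFdiam
    calc Metric.diam E / Metric.diam F ≤ (c₀ * dist x y) / Metric.diam F :=
          div_le_div_of_nonneg_right hEd hFpos.le
      _ ≤ (c₀ * dist x y) / dist x z := by
          apply div_le_div_of_nonneg_left _ hdxz hFdiam
          positivity
      _ = c₀ * (dist x y / dist x z) := mul_div_assoc _ _ _
  have hmem1 : Metric.diam E / Metric.diam F ∈ Set.Ici (0:ℝ) := by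
    have : (0:ℝ) ≤ Metric.diam E / Metric.diam F := by positivity
    exact this
  have hmem2 : c₀ * (dist x y / dist x z) ∈ Set.Ici (0:ℝ) := by
    have : (0:ℝ) ≤ c₀ * (dist x y / dist x z) := by positivity
    exact this
  have step2 : η (Metric.diam E / Metric.diam F) ≤ η (c₀ * (dist x y / dist x z)) :=
    hηmono.monotoneOn hmem1 hmem2 harg
  calc dist (f x) (f y) / dist (f x) (f z)
      ≤ c * (Metric.diam (f '' E) / Metric.diam F') := step1
    _ ≤ c * η (Metric.diam E / Metric.diam F) :=
        mul_le_mul_of_nonneg_left key (le_of_lt hc0)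
    _ ≤ c * η (c₀ * (dist x y / dist x z)) :=
        mul_le_mul_of_nonneg_left step2 (le_of_lt hc0)
end

section
/- Inverse Lipschitz bound from BDD lift: let f : X → Y be an L-BDD branched covering, with pullback factorization f = π∘g where π is 1-BDD and X^f has 1-bounded turning (the infimum defining the pullback metric is attained by a continuum). Then g⁻¹ : X^f → X is L-Lipschitz: d_X(g⁻¹(z₁), g⁻¹(z₂)) ≤ L · f*d_Y(z₁,z₂) for all z₁,z₂ ∈ X^f. Consequently, if in addition X has c-bounded turning, then g is an (Lc)-bi-Lipschitz equivalence between X and X^f. -/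
/-- Inverse Lipschitz bound from a BDD lift: for an `L`-BDD branched covering with
1-bounded turning pullback space, `g⁻¹ : X^f → X` is `L`-Lipschitz; consequently if `X`
has `c`-bounded turning then `g` is an `(Lc)`-bi-Lipschitz equivalence of `X` with `X^f`. -/
theorem stmt_16 {X Y : Type*} [MetricSpace X] [ConnectedSpace X]
    [LocallyConnectedSpace X] [LocallyCompactSpace X] [MetricSpace Y]
    (f : X → Y) (hbc : IsBranchedCovering f) (L : ℝ) (hL : 1 ≤ L)
    (hBDD : ∀ E : Set X, IsCompact E → IsConnected E →
      EMetric.diam E ≤ ENNReal.ofReal L * EMetric.diam (f '' E) ∧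
      EMetric.diam (f '' E) ≤ ENNReal.ofReal L * EMetric.diam E)
    (hattain : ∀ z₁ z₂ : X, ∃ E : Set X, IsCompact E ∧ IsConnected E ∧ z₁ ∈ E ∧ z₂ ∈ E ∧
      EMetric.diam (f '' E) = pullbackPD f z₁ z₂) :
    (∀ z₁ z₂ : X, edist z₁ z₂ ≤ ENNReal.ofReal L * pullbackPD f z₁ z₂) ∧
    (∀ c : ℝ, 1 ≤ c →
      (∀ a b : X, ∃ E : Set X, IsCompact E ∧ IsConnected E ∧ a ∈ E ∧ b ∈ E ∧
        EMetric.diam E ≤ ENNReal.ofReal c * edist a b) →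
      ∀ x₁ x₂ : X,
        edist x₁ x₂ ≤ ENNReal.ofReal (L * c) * pullbackPD f x₁ x₂ ∧
        pullbackPD f x₁ x₂ ≤ ENNReal.ofReal (L * c) * edist x₁ x₂) := by
  have h1 : ∀ z₁ z₂ : X, edist z₁ z₂ ≤ ENNReal.ofReal L * pullbackPD f z₁ z₂ := by
    intro z₁ z₂
    obtain ⟨E, hEc, hEconn, h1, h2, heq⟩ := hattain z₁ z₂
    calc edist z₁ z₂ ≤ EMetric.diam E := EMetric.edist_le_diam_of_mem h1 h2
      _ ≤ ENNReal.ofReal L * EMetric.diam (f '' E) := (hBDD E hEc hEconn).1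
      _ = ENNReal.ofReal L * pullbackPD f z₁ z₂ := by rw [heq]
  refine ⟨h1, fun c hc hbt x₁ x₂ => ⟨?_, ?_⟩⟩
  · refine le_trans (h1 x₁ x₂) (mul_le_mul_left ?_ _)
    exact ENNReal.ofReal_le_ofReal (le_mul_of_one_le_right (by linarith) hc)
  · obtain ⟨E, hEc, hEconn, h1', h2', hdiam⟩ := hbt x₁ x₂
    have hpd : pullbackPD f x₁ x₂ ≤ EMetric.diam (f '' E) := by
      refine iInf_le_of_le E (iInf_le_of_le ⟨hEc, hEconn, h1', h2'⟩ le_rfl)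
    calc pullbackPD f x₁ x₂ ≤ EMetric.diam (f '' E) := hpd
      _ ≤ ENNReal.ofReal L * EMetric.diam E := (hBDD E hEc hEconn).2
      _ ≤ ENNReal.ofReal L * (ENNReal.ofReal c * edist x₁ x₂) := mul_le_mul_right hdiam _
      _ = ENNReal.ofReal (L * c) * edist x₁ x₂ := by
          rw [ENNReal.ofReal_mul (by linarith), mul_assoc]
end
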